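/- A Laurent polynomial f(t) ∈ ℤ[t, t⁻¹] satisfies f(1) = 0 and f'(1) = 0 if and only if f is a ℤ-linear combination (with nonnegative integer coefficients allowed on each of the four families) of the polynomials g_k(t) = t^k − k·t + (k−1) and their images under t ↦ t^{−1} and negation; equivalently, the set {f ∈ ℤ[t,t⁻¹] : f(1) = 0, f'(1) = 0} is the subgroup of ℤ[t,t⁻¹] generated by {t^k − k·t + (k−1) : k ∈ ℤ}. -/

import Mathlib

open Finset LaurentPolynomial

/-- A Gauss diagram, abstracted as a finite set of signed chords together with the
asymmetric relation `ltr d c` : "chord `d` crosses chord `c` from left to right"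
(so `ltr c d` means `d` crosses `c` from right to left). -/
structure GaussDiagram where
  Chord : Type
  [instFintype : Fintype Chord]
  [instDecEq : DecidableEq Chord]
  w : Chord → ℤ
  sign : ∀ c, w c = 1 ∨ w c = -1
  ltr : Chord → Chord → Prop
  [instDecRel : DecidableRel ltr]
  irrefl : ∀ c, ¬ ltr c c
  asymm : ∀ c d, ltr c d → ¬ ltr d c

attribute [instance] GaussDiagram.instFintype GaussDiagram.instDecEq GaussDiagram.instDecRel

/-- The chord index `Ind c = r₊(c) − r₋(c) − l₊(c) + l₋(c)`. -/
def GaussDiagram.Ind (G : GaussDiagram) (c : G.Chord) : ℤ :=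
  (∑ d ∈ univ.filter (fun d => G.ltr d c), G.w d)
    - (∑ d ∈ univ.filter (fun d => G.ltr c d), G.w d)

/-- The writhe polynomial `W_G(t) = ∑_c w(c) t^{Ind(c)} − ∑_c w(c)`. -/
noncomputable def GaussDiagram.W (G : GaussDiagram) : LaurentPolynomial ℤ :=
  (∑ c, C (G.w c) * T (G.Ind c)) - C (∑ c, G.w c)

/-- Evaluation of a Laurent polynomial at `t = 1` (the sum of its coefficients). -/
def evalOne (f : LaurentPolynomial ℤ) : ℤ := f.coeff.sum fun _ a => a

/-- Evaluation of the formal derivative of a Laurent polynomial at `t = 1`. -/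
def derivOne (f : LaurentPolynomial ℤ) : ℤ := f.coeff.sum fun n a => n * a

/-!
Write `f(1) + f'(1)(t − 1)` for the tangent line of `f` at `t = 1`. Subtracting it is additive in
`f` and sends `a·t^n` to `a` times the generator with `k = n`, so `f` minus its tangent line lies in
the subgroup for every `f`; when `f(1) = f'(1) = 0` this is `f` itself. Conversely, both conditions
are additive and hold for every generator.
-/

/-- `t^k` minus its tangent line `1 + k(t − 1)` at `t = 1`. -/
noncomputable def powSubTangent (k : ℤ) : LaurentPolynomial ℤ := T k - C k * T 1 + C (k - 1)

noncomputable def evalOneHom : LaurentPolynomial ℤ →+ ℤ :=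
  (Finsupp.liftAddHom fun _ => AddMonoidHom.id ℤ).comp
    AddMonoidAlgebra.coeffAddEquiv.toAddMonoidHom

noncomputable def derivOneHom : LaurentPolynomial ℤ →+ ℤ :=
  (Finsupp.liftAddHom fun n => AddMonoidHom.mul n).comp
    AddMonoidAlgebra.coeffAddEquiv.toAddMonoidHom

@[simp]
theorem evalOneHom_apply (f : LaurentPolynomial ℤ) : evalOneHom f = evalOne f := rfl

@[simp]
theorem derivOneHom_apply (f : LaurentPolynomial ℤ) : derivOneHom f = derivOne f := rfl

theorem evalOne_add (f g : LaurentPolynomial ℤ) : evalOne (f + g) = evalOne f + evalOne g :=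
  map_add evalOneHom f g

theorem derivOne_add (f g : LaurentPolynomial ℤ) : derivOne (f + g) = derivOne f + derivOne g :=
  map_add derivOneHom f g

@[simp]
theorem evalOne_C_mul_T (a n : ℤ) : evalOne (C a * T n) = a := by
  rw [← single_eq_C_mul_T, evalOne, AddMonoidAlgebra.coeff_single,
    Finsupp.sum_single_index rfl]

@[simp]
theorem derivOne_C_mul_T (a n : ℤ) : derivOne (C a * T n) = n * a := by
  rw [← single_eq_C_mul_T, derivOne, AddMonoidAlgebra.coeff_single,
    Finsupp.sum_single_index (mul_zero n)]

@[simp]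
theorem evalOne_T (n : ℤ) : evalOne (T n) = 1 := by
  simpa using evalOne_C_mul_T 1 n

@[simp]
theorem derivOne_T (n : ℤ) : derivOne (T n) = n := by
  simpa using derivOne_C_mul_T 1 n

@[simp]
theorem evalOne_C (a : ℤ) : evalOne (C a) = a := by
  simpa using evalOne_C_mul_T a 0

@[simp]
theorem derivOne_C (a : ℤ) : derivOne (C a) = 0 := by
  simpa using derivOne_C_mul_T a 0

theorem closure_powSubTangent_le_ker_inf_ker :
    AddSubgroup.closure {g | ∃ k, g = powSubTangent k} ≤
      evalOneHom.ker ⊓ derivOneHom.ker := by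
  refine (AddSubgroup.closure_le _).mpr ?_
  rintro _ ⟨k, rfl⟩
  simp only [SetLike.mem_coe, AddSubgroup.mem_inf, AddMonoidHom.mem_ker, powSubTangent, map_add,
    map_sub, evalOneHom_apply, derivOneHom_apply, evalOne_T, derivOne_T, evalOne_C, derivOne_C,
    evalOne_C_mul_T, derivOne_C_mul_T]
  constructor <;> ring

theorem sub_tangent_mem_closure (f : LaurentPolynomial ℤ) :
    f - C (derivOne f) * T 1 + C (derivOne f - evalOne f) ∈
      AddSubgroup.closure {g | ∃ k, g = powSubTangent k} := by
  induction f using LaurentPolynomial.induction_on' with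
  | add p q hp hq =>
    convert add_mem hp hq using 1
    simp only [evalOne_add, derivOne_add, map_add, map_sub]
    ring
  | C_mul_T n a =>
    have h : C a * T n - C (derivOne (C a * T n)) * T 1
        + C (derivOne (C a * T n) - evalOne (C a * T n)) = a • powSubTangent n := by
      simp only [evalOne_C_mul_T, derivOne_C_mul_T, powSubTangent, smul_eq_C_mul, map_mul,
        map_sub, map_one]
      ring
    rw [h]
    exact AddSubgroup.zsmul_mem _
      (AddSubgroup.subset_closure (k := {g | ∃ k, g = powSubTangent k}) ⟨n, rfl⟩) a

/-- A Laurent polynomial `f ∈ ℤ[t,t⁻¹]` satisfies `f(1) = 0` and `f'(1) = 0` if and only if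
it lies in the additive subgroup generated by the polynomials `t^k − k·t + (k−1)`, `k ∈ ℤ`. -/
theorem eval_one_eq_zero_and_deriv_one_eq_zero_iff (f : LaurentPolynomial ℤ) :
    (evalOne f = 0 ∧ derivOne f = 0) ↔
      f ∈ AddSubgroup.closure
        {g : LaurentPolynomial ℤ | ∃ k : ℤ, g = T k - C k * T 1 + C (k - 1)} := by
  constructor
  · rintro ⟨h₀, h₁⟩
    have h := sub_tangent_mem_closure f
    rwa [h₀, h₁, sub_zero, map_zero, zero_mul, sub_zero, add_zero] at h
  · intro hf
    exact AddSubgroup.mem_inf.mp (closure_powSubTangent_le_ker_inf_ker hf)
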